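/- arXiv:2503.13066 — 5 statements merged into one kernel-verified Lean document; each statement's English description precedes it below -/
import Mathlib

section
/- Let (Ω, ℱ, P) be a probability space, A : Ω → {1,2} measurable with π_a := P(A = a) ∈ (0,1) and π₁ + π₂ = 1. Let Y₁, Y₂, M₁, M₂ : Ω → ℝ be integrable, define the observed outcome Y(ω) := Y_{A(ω)}(ω) and observed prediction M(ω) := M_{A(ω)}(ω), and set μ_a := E[Y_a]. Suppose the randomization invariance holds: for every a ∈ {1,2} and every integrable random variable Z measurable with respect to σ(Y₁, Y₂, M₁, M₂), E[Z·1{A=a}] = π_a·E[Z]. Then for each a ∈ {1,2}, the AIPW-style influence function ψ_a(ω) := (1{A(ω)=a}/π_a)·(Y(ω) − M(ω)) + M_a(ω) − μ_a satisfies E[ψ_a] = 0. -/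
open MeasureTheory

/-- The AIPW-style influence function has mean zero under the randomization invariance,
even when the working model is misspecified. -/
theorem stmt_5 {Ω : Type*} [MeasurableSpace Ω] (P : Measure Ω) [IsProbabilityMeasure P]
    (A : Ω → Fin 2) (hA : Measurable A)
    (π : Fin 2 → ℝ) (hπdef : ∀ a, π a = (P {ω | A ω = a}).toReal)
    (hπ : ∀ a, π a ∈ Set.Ioo (0 : ℝ) 1) (hπsum : π 0 + π 1 = 1)
    (Ypot Mpred : Fin 2 → Ω → ℝ)
    (hY : ∀ a, Integrable (Ypot a) P) (hM : ∀ a, Integrable (Mpred a) P)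
    (μ : Fin 2 → ℝ) (hμ : ∀ a, μ a = ∫ ω, Ypot a ω ∂P)
    (hinv : ∀ (a : Fin 2) (Z : Ω → ℝ), Integrable Z P →
      Measurable[MeasurableSpace.comap
        (fun ω => (Ypot 0 ω, Ypot 1 ω, Mpred 0 ω, Mpred 1 ω)) inferInstance] Z →
      ∫ ω in {ω | A ω = a}, Z ω ∂P = π a * ∫ ω, Z ω ∂P) :
    ∀ a : Fin 2,
      ∫ ω, ((if A ω = a then 1 else 0) / π a * (Ypot (A ω) ω - Mpred (A ω) ω)
        + Mpred a ω - μ a) ∂P = 0 := by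
  intro a
  have hπa : π a ≠ 0 := ne_of_gt (hπ a).1
  set g : Ω → ℝ × ℝ × ℝ × ℝ := fun ω => (Ypot 0 ω, Ypot 1 ω, Mpred 0 ω, Mpred 1 ω) with hg
  set Z : Ω → ℝ := fun ω => Ypot a ω - Mpred a ω with hZ
  have hZint : Integrable Z P := (hY a).sub (hM a)
  have hZmeas : Measurable[MeasurableSpace.comap g inferInstance] Z := by
    have hgm : Measurable[MeasurableSpace.comap g inferInstance] g := comap_measurable g
    fin_cases a
    · exact (measurable_fst.sub (measurable_snd.comp measurable_snd).fst).comp hgm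
    · exact ((measurable_fst.comp measurable_snd).sub
        (measurable_snd.comp (measurable_snd.comp measurable_snd))).comp hgm
  have hkey := hinv a Z hZint hZmeas
  have hAset : MeasurableSet {ω | A ω = a} := hA (measurableSet_singleton a)
  -- rewrite the integrand
  have heq : ∀ ω, ((if A ω = a then 1 else 0) / π a * (Ypot (A ω) ω - Mpred (A ω) ω)
      + Mpred a ω - μ a)
      = Set.indicator {ω | A ω = a} (fun ω => (π a)⁻¹ * Z ω) ω + Mpred a ω - μ a := by
    intro ω
    by_cases h : A ω = a
    · simp [Set.indicator, h, hZ, div_eq_mul_inv, mul_comm]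
    · simp [Set.indicator, h]
  have hind : Integrable (Set.indicator {ω | A ω = a} (fun ω => (π a)⁻¹ * Z ω)) P :=
    ((hZint.const_mul _).indicator hAset)
  have hIind : ∫ ω, Set.indicator {ω | A ω = a} (fun ω => (π a)⁻¹ * Z ω) ω ∂P
      = ∫ ω, Ypot a ω ∂P - ∫ ω, Mpred a ω ∂P := by
    rw [integral_indicator hAset, integral_const_mul, hkey, integral_sub (hY a) (hM a)]
    field_simp
  calc ∫ ω, ((if A ω = a then 1 else 0) / π a * (Ypot (A ω) ω - Mpred (A ω) ω)
        + Mpred a ω - μ a) ∂P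
      = ∫ ω, (Set.indicator {ω | A ω = a} (fun ω => (π a)⁻¹ * Z ω) ω + Mpred a ω - μ a) ∂P := by
        simp_rw [heq]
    _ = (∫ ω, Set.indicator {ω | A ω = a} (fun ω => (π a)⁻¹ * Z ω) ω ∂P
          + ∫ ω, Mpred a ω ∂P) - μ a := by
        simp_rw [add_sub_assoc]
        rw [integral_add (g := fun ω => Mpred a ω - μ a) hind ((hM a).sub (integrable_const _)),
          integral_sub (g := fun _ => μ a) (hM a) (integrable_const _), integral_const]
        simp [add_sub_assoc]
    _ = 0 := by rw [hIind, hμ a]; ring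
end

section
/- Let (Ω, ℱ, P) be a probability space, A : Ω → {1,2} measurable with π_a := P(A = a) ∈ (0,1) and π₁ + π₂ = 1. Let Y₁, Y₂, M₁, M₂ : Ω → ℝ be square-integrable, define Y(ω) := Y_{A(ω)}(ω), M(ω) := M_{A(ω)}(ω), and μ_a := E[Y_a]. Assume the randomization invariance: for every a ∈ {1,2} and every integrable random variable Z measurable with respect to σ(Y₁, Y₂, M₁, M₂), E[Z·1{A=a}] = π_a·E[Z]. Assume also the prediction unbiasedness E[M_a] = E[Y_a] for a ∈ {1,2}. Define ψ_a(ω) := (1{A(ω)=a}/π_a)·(Y(ω) − M(ω)) + M_a(ω) − μ_a. Then for each a ∈ {1,2}: Var(ψ_a) = (1/π_a)·Var(Y_a − M_a) + 2·Cov(Y_a, M_a) − Var(M_a), where Var(Z) := E[Z²] − (E[Z])² and Cov(Z,Z') := E[ZZ'] − E[Z]E[Z']. -/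
open MeasureTheory

lemma l2_mul_integrable' {Ω : Type*} [MeasurableSpace Ω] {P : Measure Ω}
    {f g : Ω → ℝ} (hf : MemLp f 2 P) (hg : MemLp g 2 P) :
    Integrable (fun ω => f ω * g ω) P := by
  have h := hf.smul (φ := g) hg (r := 1)
  have h2 := memLp_one_iff_integrable.mp h
  exact (by simpa [Pi.smul_apply, smul_eq_mul, mul_comm] using h2 : Integrable (f * g) P)

/-- Diagonal case of Proposition 2: the variance of the AIPW-style influence function
equals `(1/π_a)·Var(Y_a − M_a) + 2·Cov(Y_a, M_a) − Var(M_a)`. -/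
theorem stmt_7 {Ω : Type*} [MeasurableSpace Ω] (P : Measure Ω) [IsProbabilityMeasure P]
    (A : Ω → Fin 2) (hA : Measurable A)
    (π : Fin 2 → ℝ) (hπdef : ∀ a, π a = (P {ω | A ω = a}).toReal)
    (hπ : ∀ a, π a ∈ Set.Ioo (0 : ℝ) 1) (hπsum : π 0 + π 1 = 1)
    (Ypot Mpred : Fin 2 → Ω → ℝ)
    (hY : ∀ a, MemLp (Ypot a) 2 P) (hM : ∀ a, MemLp (Mpred a) 2 P)
    (μ : Fin 2 → ℝ) (hμ : ∀ a, μ a = ∫ ω, Ypot a ω ∂P)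
    (hinv : ∀ (a : Fin 2) (Z : Ω → ℝ), Integrable Z P →
      Measurable[MeasurableSpace.comap
        (fun ω => (Ypot 0 ω, Ypot 1 ω, Mpred 0 ω, Mpred 1 ω)) inferInstance] Z →
      ∫ ω in {ω | A ω = a}, Z ω ∂P = π a * ∫ ω, Z ω ∂P)
    (hunbiased : ∀ a, ∫ ω, Mpred a ω ∂P = ∫ ω, Ypot a ω ∂P)
    (ψ : Fin 2 → Ω → ℝ)
    (hψ : ∀ a ω, ψ a ω = (if A ω = a then 1 else 0) / π a
      * (Ypot (A ω) ω - Mpred (A ω) ω) + Mpred a ω - μ a) :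
    ∀ a : Fin 2,
      (∫ ω, (ψ a ω) ^ 2 ∂P) - (∫ ω, ψ a ω ∂P) ^ 2
        = (1 / π a) * ((∫ ω, (Ypot a ω - Mpred a ω) ^ 2 ∂P)
              - (∫ ω, (Ypot a ω - Mpred a ω) ∂P) ^ 2)
          + 2 * ((∫ ω, Ypot a ω * Mpred a ω ∂P)
              - (∫ ω, Ypot a ω ∂P) * ∫ ω, Mpred a ω ∂P)
          - ((∫ ω, (Mpred a ω) ^ 2 ∂P) - (∫ ω, Mpred a ω ∂P) ^ 2) := by
  intro a
  have hπ0 : π a ≠ 0 := ne_of_gt (hπ a).1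
  set T : Ω → ℝ × ℝ × ℝ × ℝ := fun ω => (Ypot 0 ω, Ypot 1 ω, Mpred 0 ω, Mpred 1 ω) with hT
  -- representation of Ypot a, Mpred a through T
  obtain ⟨FY, FM, hFY, hFM, hYrep, hMrep⟩ :
      ∃ FY FM : ℝ × ℝ × ℝ × ℝ → ℝ, Measurable FY ∧ Measurable FM ∧
        (∀ ω, Ypot a ω = FY (T ω)) ∧ (∀ ω, Mpred a ω = FM (T ω)) := by
    fin_cases a
    · exact ⟨fun p => p.1, fun p => p.2.2.1, measurable_fst,
        (measurable_fst.comp (measurable_snd.comp measurable_snd)),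
        fun ω => rfl, fun ω => rfl⟩
    · exact ⟨fun p => p.2.1, fun p => p.2.2.2,
        measurable_fst.comp measurable_snd,
        measurable_snd.comp (measurable_snd.comp measurable_snd),
        fun ω => rfl, fun ω => rfl⟩
  -- indicator function
  set f : Ω → ℝ := fun ω => if A ω = a then 1 else 0 with hfdef
  have hs : MeasurableSet {ω | A ω = a} := hA (measurableSet_singleton a)
  have hf_meas : Measurable f := Measurable.ite hs measurable_const measurable_const
  -- key invariance lemma
  have key : ∀ (Z : Ω → ℝ) (G : ℝ × ℝ × ℝ × ℝ → ℝ), Measurable G →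
      (∀ ω, Z ω = G (T ω)) → Integrable Z P →
      ∫ ω, f ω * Z ω ∂P = π a * ∫ ω, Z ω ∂P := by
    intro Z G hG hZG hZint
    have hmeas : Measurable[MeasurableSpace.comap T inferInstance] Z := by
      have : Z = fun ω => G (T ω) := funext hZG
      rw [this]
      exact hG.comp (Measurable.of_comap_le le_rfl)
    have h1 := hinv a Z hZint hmeas
    rw [← h1, ← integral_indicator hs]
    congr 1; funext ω
    by_cases h : A ω = a <;> simp [hfdef, Set.indicator, h]
  -- abbreviations
  set D : Ω → ℝ := fun ω => Ypot a ω - Mpred a ω with hDdef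
  set g : Ω → ℝ := fun ω => Mpred a ω - μ a with hgdef
  have hDℒ : MemLp D 2 P := (hY a).sub (hM a)
  have hgℒ : MemLp g 2 P := (hM a).sub (memLp_const (μ a))
  have two_ne : (2 : ENNReal) ≠ ⊤ := by norm_num
  have one_le_two : (1 : ENNReal) ≤ 2 := by norm_num
  have hYi : Integrable (Ypot a) P := (hY a).integrable one_le_two
  have hMi : Integrable (Mpred a) P := (hM a).integrable one_le_two
  have hDi : Integrable D P := hDℒ.integrable one_le_two
  have hgi : Integrable g P := hgℒ.integrable one_le_two
  have hD2i : Integrable (fun ω => D ω ^ 2) P := hDℒ.integrable_sq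
  have hM2i : Integrable (fun ω => Mpred a ω ^ 2) P := (hM a).integrable_sq
  have hg2i : Integrable (fun ω => g ω ^ 2) P := hgℒ.integrable_sq
  have hYMi : Integrable (fun ω => Ypot a ω * Mpred a ω) P :=
    l2_mul_integrable' (hY a) (hM a)
  have hDgi : Integrable (fun ω => D ω * g ω) P := l2_mul_integrable' hDℒ hgℒ
  have hfbd : ∃ C, ∀ ω, ‖f ω‖ ≤ C := ⟨1, fun ω => by
    by_cases h : A ω = a <;> simp [hfdef, h]⟩
  have hfD : Integrable (fun ω => f ω * D ω) P :=
    hDi.bdd_mul hf_meas.aestronglyMeasurable (ae_of_all _ hfbd.choose_spec)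
  have hfD2 : Integrable (fun ω => f ω * D ω ^ 2) P :=
    hD2i.bdd_mul hf_meas.aestronglyMeasurable (ae_of_all _ hfbd.choose_spec)
  have hfDg : Integrable (fun ω => f ω * (D ω * g ω)) P :=
    hDgi.bdd_mul hf_meas.aestronglyMeasurable (ae_of_all _ hfbd.choose_spec)
  -- key applications
  have kD : ∫ ω, f ω * D ω ∂P = π a * ∫ ω, D ω ∂P :=
    key D (fun p => FY p - FM p) (hFY.sub hFM)
      (fun ω => by simp [hDdef, hYrep ω, hMrep ω]) hDi
  have kD2 : ∫ ω, f ω * D ω ^ 2 ∂P = π a * ∫ ω, D ω ^ 2 ∂P :=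
    key (fun ω => D ω ^ 2) (fun p => (FY p - FM p) ^ 2) ((hFY.sub hFM).pow_const 2)
      (fun ω => by simp [hDdef, hYrep ω, hMrep ω]) hD2i
  have kDg : ∫ ω, f ω * (D ω * g ω) ∂P = π a * ∫ ω, D ω * g ω ∂P :=
    key (fun ω => D ω * g ω) (fun p => (FY p - FM p) * (FM p - μ a))
      ((hFY.sub hFM).mul (hFM.sub measurable_const))
      (fun ω => by simp [hDdef, hgdef, hYrep ω, hMrep ω]) hDgi
  -- basic expectations
  have hED : ∫ ω, D ω ∂P = 0 := by
    rw [hDdef]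
    rw [integral_sub hYi hMi, hunbiased a, sub_self]
  have hEg : ∫ ω, g ω ∂P = 0 := by
    rw [hgdef]
    rw [integral_sub hMi (integrable_const _), integral_const, probReal_univ,
      smul_eq_mul, one_mul, hunbiased a, hμ a, sub_self]
  -- mean of ψ is 0
  have hψ' : ∀ ω, ψ a ω = f ω / π a * D ω + g ω := by
    intro ω
    rw [hψ a ω]
    by_cases h : A ω = a
    · simp only [hfdef, hDdef, hgdef, h, if_true]; ring
    · simp only [hfdef, hDdef, hgdef, h, if_false]; ring
  have hmean : ∫ ω, ψ a ω ∂P = 0 := by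
    have e1 : ∀ ω, ψ a ω = (1 / π a) * (f ω * D ω) + g ω := fun ω => by
      rw [hψ' ω]; ring
    have hu : Integrable (fun ω => (1 / π a) * (f ω * D ω)) P := hfD.const_mul _
    rw [integral_congr_ae (ae_of_all _ e1), integral_add hu hgi,
      integral_const_mul, kD, hED, hEg]
    ring
  -- second moment
  have hsq : ∀ ω, ψ a ω ^ 2 = (1 / π a) ^ 2 * (f ω * D ω ^ 2)
      + (2 / π a) * (f ω * (D ω * g ω)) + g ω ^ 2 := by
    intro ω
    rw [hψ' ω]
    by_cases h : A ω = a
    · simp only [hfdef, h, if_true]; field_simp; ring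
    · simp only [hfdef, h, if_false]; ring
  have hEψ2 : ∫ ω, ψ a ω ^ 2 ∂P
      = (1 / π a) * ∫ ω, D ω ^ 2 ∂P + 2 * ∫ ω, D ω * g ω ∂P + ∫ ω, g ω ^ 2 ∂P := by
    have hu1 : Integrable (fun ω => (1 / π a) ^ 2 * (f ω * D ω ^ 2)) P :=
      hfD2.const_mul _
    have hu2 : Integrable (fun ω => (2 / π a) * (f ω * (D ω * g ω))) P :=
      hfDg.const_mul _
    have hu12 : Integrable (fun ω => (1 / π a) ^ 2 * (f ω * D ω ^ 2)
        + (2 / π a) * (f ω * (D ω * g ω))) P := hu1.add hu2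
    rw [integral_congr_ae (ae_of_all _ hsq), integral_add hu12 hg2i,
      integral_add hu1 hu2, integral_const_mul, integral_const_mul, kD2, kDg]
    field_simp
  -- compute ∫ D*g and ∫ g^2
  have hEDg : ∫ ω, D ω * g ω ∂P
      = (∫ ω, Ypot a ω * Mpred a ω ∂P) - ∫ ω, Mpred a ω ^ 2 ∂P := by
    have e : ∀ ω, D ω * g ω = (Ypot a ω * Mpred a ω - Mpred a ω ^ 2)
        - (μ a * Ypot a ω - μ a * Mpred a ω) := fun ω => by
      simp only [hDdef, hgdef]; ring
    have hv1 : Integrable (fun ω => Ypot a ω * Mpred a ω - Mpred a ω ^ 2) P :=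
      hYMi.sub hM2i
    have hv2a : Integrable (fun ω => μ a * Ypot a ω) P := hYi.const_mul _
    have hv2b : Integrable (fun ω => μ a * Mpred a ω) P := hMi.const_mul _
    have hv2 : Integrable (fun ω => μ a * Ypot a ω - μ a * Mpred a ω) P :=
      hv2a.sub hv2b
    rw [integral_congr_ae (ae_of_all _ e), integral_sub hv1 hv2,
      integral_sub hYMi hM2i, integral_sub hv2a hv2b,
      integral_const_mul, integral_const_mul, hunbiased a]
    ring
  have hEg2 : ∫ ω, g ω ^ 2 ∂P
      = (∫ ω, Mpred a ω ^ 2 ∂P) - (∫ ω, Mpred a ω ∂P) ^ 2 := by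
    have e : ∀ ω, g ω ^ 2 = Mpred a ω ^ 2 - (2 * μ a) * Mpred a ω + μ a ^ 2 :=
      fun ω => by simp only [hgdef]; ring
    have hw1a : Integrable (fun ω => (2 * μ a) * Mpred a ω) P := hMi.const_mul _
    have hw1 : Integrable (fun ω => Mpred a ω ^ 2 - (2 * μ a) * Mpred a ω) P :=
      hM2i.sub hw1a
    rw [integral_congr_ae (ae_of_all _ e), integral_add hw1 (integrable_const _),
      integral_sub hM2i hw1a, integral_const_mul, integral_const,
      probReal_univ, smul_eq_mul, one_mul, hunbiased a, ← hμ a]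
    ring
  -- finish
  have hEM : ∫ ω, Mpred a ω ∂P = μ a := by rw [hunbiased a, ← hμ a]
  have hEY : ∫ ω, Ypot a ω ∂P = μ a := (hμ a).symm
  rw [hmean, hEψ2, hEDg, hEg2, hED, hEM, hEY]
  ring
end

section
/- Let (Ω, ℱ, P) be a probability space, A : Ω → {1,2} measurable with π_a := P(A = a) ∈ (0,1) and π₁ + π₂ = 1. Let Y₁, Y₂, M₁, M₂ : Ω → ℝ be square-integrable, define Y(ω) := Y_{A(ω)}(ω), M(ω) := M_{A(ω)}(ω), and μ_a := E[Y_a]. Assume the randomization invariance: for every a ∈ {1,2} and every integrable random variable Z measurable with respect to σ(Y₁, Y₂, M₁, M₂), E[Z·1{A=a}] = π_a·E[Z]. Assume also E[M_a] = E[Y_a] for a ∈ {1,2}. Define ψ_a(ω) := (1{A(ω)=a}/π_a)·(Y(ω) − M(ω)) + M_a(ω) − μ_a. Then for a ≠ b in {1,2}: Cov(ψ_a, ψ_b) = Cov(Y_a, M_b) + Cov(Y_b, M_a) − Cov(M_a, M_b), where Cov(Z,Z') := E[ZZ'] − E[Z]E[Z']. -/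
open MeasureTheory

/-- Off-diagonal case of Proposition 2: the covariance of the two AIPW-style influence
functions equals `Cov(Y_a, M_b) + Cov(Y_b, M_a) − Cov(M_a, M_b)`. -/
theorem stmt_8 {Ω : Type*} [MeasurableSpace Ω] (P : Measure Ω) [IsProbabilityMeasure P]
    (A : Ω → Fin 2) (hA : Measurable A)
    (π : Fin 2 → ℝ) (hπdef : ∀ a, π a = (P {ω | A ω = a}).toReal)
    (hπ : ∀ a, π a ∈ Set.Ioo (0 : ℝ) 1) (hπsum : π 0 + π 1 = 1)
    (Ypot Mpred : Fin 2 → Ω → ℝ)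
    (hY : ∀ a, MemLp (Ypot a) 2 P) (hM : ∀ a, MemLp (Mpred a) 2 P)
    (μ : Fin 2 → ℝ) (hμ : ∀ a, μ a = ∫ ω, Ypot a ω ∂P)
    (hinv : ∀ (a : Fin 2) (Z : Ω → ℝ), Integrable Z P →
      Measurable[MeasurableSpace.comap
        (fun ω => (Ypot 0 ω, Ypot 1 ω, Mpred 0 ω, Mpred 1 ω)) inferInstance] Z →
      ∫ ω in {ω | A ω = a}, Z ω ∂P = π a * ∫ ω, Z ω ∂P)
    (hunbiased : ∀ a, ∫ ω, Mpred a ω ∂P = ∫ ω, Ypot a ω ∂P)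
    (ψ : Fin 2 → Ω → ℝ)
    (hψ : ∀ a ω, ψ a ω = (if A ω = a then 1 else 0) / π a
      * (Ypot (A ω) ω - Mpred (A ω) ω) + Mpred a ω - μ a) :
    ∀ a b : Fin 2, a ≠ b →
      (∫ ω, ψ a ω * ψ b ω ∂P) - (∫ ω, ψ a ω ∂P) * ∫ ω, ψ b ω ∂P
        = ((∫ ω, Ypot a ω * Mpred b ω ∂P)
              - (∫ ω, Ypot a ω ∂P) * ∫ ω, Mpred b ω ∂P)
          + ((∫ ω, Ypot b ω * Mpred a ω ∂P)
              - (∫ ω, Ypot b ω ∂P) * ∫ ω, Mpred a ω ∂P)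
          - ((∫ ω, Mpred a ω * Mpred b ω ∂P)
              - (∫ ω, Mpred a ω ∂P) * ∫ ω, Mpred b ω ∂P) := by
  intro a b hab
  -- measurability with respect to the σ-algebra generated by (Y₀, Y₁, M₀, M₁)
  have hTm : Measurable[MeasurableSpace.comap
      (fun ω => (Ypot 0 ω, Ypot 1 ω, Mpred 0 ω, Mpred 1 ω)) inferInstance]
      (fun ω => (Ypot 0 ω, Ypot 1 ω, Mpred 0 ω, Mpred 1 ω)) :=
    comap_measurable _
  have hYm : ∀ c : Fin 2, Measurable[MeasurableSpace.comap
      (fun ω => (Ypot 0 ω, Ypot 1 ω, Mpred 0 ω, Mpred 1 ω)) inferInstance] (Ypot c) := by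
    intro c
    fin_cases c
    · exact measurable_fst.comp hTm
    · exact (measurable_fst.comp measurable_snd).comp hTm
  have hMm : ∀ c : Fin 2, Measurable[MeasurableSpace.comap
      (fun ω => (Ypot 0 ω, Ypot 1 ω, Mpred 0 ω, Mpred 1 ω)) inferInstance] (Mpred c) := by
    intro c
    fin_cases c
    · exact (measurable_fst.comp (measurable_snd.comp measurable_snd)).comp hTm
    · exact ((measurable_snd.comp measurable_snd).comp measurable_snd).comp hTm
  -- integrability of products of L² functions
  have hmul : ∀ (F G : Ω → ℝ), MemLp F 2 P → MemLp G 2 P →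
      Integrable (fun ω => F ω * G ω) P := by
    intro F G hF hG
    have h : MemLp (F • G) 1 P :=
      hG.smul hF (hpqr := ⟨by simp [ENNReal.inv_two_add_inv_two]⟩)
    exact h.integrable le_rfl
  have hYint : ∀ c, Integrable (Ypot c) P := fun c => (hY c).integrable one_le_two
  have hMint : ∀ c, Integrable (Mpred c) P := fun c => (hM c).integrable one_le_two
  have hfL2 : ∀ c, MemLp (fun ω => Ypot c ω - Mpred c ω) 2 P := fun c => (hY c).sub (hM c)
  have hgL2 : ∀ c, MemLp (fun ω => Mpred c ω - μ c) 2 P :=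
    fun c => (hM c).sub (memLp_const (μ c))
  have hπa : π a ≠ 0 := (hπ a).1.ne'
  have hπb : π b ≠ 0 := (hπ b).1.ne'
  have hsa : MeasurableSet {ω | A ω = a} := hA (measurableSet_singleton a)
  have hsb : MeasurableSet {ω | A ω = b} := hA (measurableSet_singleton b)
  -- pointwise form of ψ
  have hψ' : ∀ c ω, ψ c ω =
      Set.indicator {ω | A ω = c} (fun ω => (Ypot c ω - Mpred c ω) / π c) ω
        + (Mpred c ω - μ c) := by
    intro c ω
    rw [hψ]
    by_cases h : A ω = c
    · have hmem : ω ∈ {ω | A ω = c} := h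
      rw [Set.indicator_of_mem hmem, if_pos h, h]
      ring
    · have hnm : ω ∉ {ω | A ω = c} := h
      rw [Set.indicator_of_notMem hnm, if_neg h]
      ring
  -- the mean of each ψ is zero
  have hmean : ∀ c, ∫ ω, ψ c ω ∂P = 0 := by
    intro c
    have hsc : MeasurableSet {ω | A ω = c} := hA (measurableSet_singleton c)
    have hfint : Integrable (fun ω => (Ypot c ω - Mpred c ω) / π c) P :=
      ((hYint c).sub (hMint c)).div_const (π c)
    have hkey : ∫ ω in {ω | A ω = c}, (Ypot c ω - Mpred c ω) ∂P
        = π c * ∫ ω, (Ypot c ω - Mpred c ω) ∂P :=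
      hinv c _ ((hYint c).sub (hMint c)) ((hYm c).sub (hMm c))
    have h0 : ∫ ω, (Ypot c ω - Mpred c ω) ∂P = 0 := by
      rw [integral_sub (hYint c) (hMint c), hunbiased c]; ring
    calc ∫ ω, ψ c ω ∂P
        = ∫ ω, (Set.indicator {ω | A ω = c} (fun ω => (Ypot c ω - Mpred c ω) / π c) ω
            + (Mpred c ω - μ c)) ∂P :=
          integral_congr_ae (Filter.Eventually.of_forall fun ω => hψ' c ω)
      _ = (∫ ω, Set.indicator {ω | A ω = c}
              (fun ω => (Ypot c ω - Mpred c ω) / π c) ω ∂P)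
            + ∫ ω, (Mpred c ω - μ c) ∂P :=
          integral_add (hfint.indicator hsc) ((hMint c).sub (integrable_const (μ c)))
      _ = 0 := by
          rw [integral_indicator hsc, integral_div, hkey, h0,
            integral_sub (hMint c) (integrable_const (μ c)), hunbiased c, ← hμ c]
          simp
  -- pointwise form of the product ψ_a ψ_b
  have hprod : ∀ ω, ψ a ω * ψ b ω =
      Set.indicator {ω | A ω = a}
        (fun ω => (Ypot a ω - Mpred a ω) * (Mpred b ω - μ b) / π a) ω
      + Set.indicator {ω | A ω = b}
        (fun ω => (Ypot b ω - Mpred b ω) * (Mpred a ω - μ a) / π b) ω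
      + (Mpred a ω - μ a) * (Mpred b ω - μ b) := by
    intro ω
    rw [hψ' a, hψ' b]
    by_cases ha : A ω = a
    · have hnb : ω ∉ {ω | A ω = b} := fun h => hab (ha.symm.trans h)
      have hma : ω ∈ {ω | A ω = a} := ha
      rw [Set.indicator_of_mem hma, Set.indicator_of_mem hma,
        Set.indicator_of_notMem hnb, Set.indicator_of_notMem hnb]
      ring
    · have hna : ω ∉ {ω | A ω = a} := ha
      by_cases hb : A ω = b
      · have hmb : ω ∈ {ω | A ω = b} := hb
        rw [Set.indicator_of_mem hmb, Set.indicator_of_mem hmb,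
          Set.indicator_of_notMem hna, Set.indicator_of_notMem hna]
        ring
      · have hnb : ω ∉ {ω | A ω = b} := hb
        rw [Set.indicator_of_notMem hna, Set.indicator_of_notMem hna,
          Set.indicator_of_notMem hnb, Set.indicator_of_notMem hnb]
        ring
  -- integral of the product
  have hZab_int : Integrable (fun ω => (Ypot a ω - Mpred a ω) * (Mpred b ω - μ b)) P :=
    hmul _ _ (hfL2 a) (hgL2 b)
  have hZba_int : Integrable (fun ω => (Ypot b ω - Mpred b ω) * (Mpred a ω - μ a)) P :=
    hmul _ _ (hfL2 b) (hgL2 a)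
  have hgg_int : Integrable (fun ω => (Mpred a ω - μ a) * (Mpred b ω - μ b)) P :=
    hmul _ _ (hgL2 a) (hgL2 b)
  have hkey1 := hinv a _ hZab_int (((hYm a).sub (hMm a)).mul ((hMm b).sub measurable_const))
  have hkey2 := hinv b _ hZba_int (((hYm b).sub (hMm b)).mul ((hMm a).sub measurable_const))
  have hintprod : ∫ ω, ψ a ω * ψ b ω ∂P
      = (∫ ω, (Ypot a ω - Mpred a ω) * (Mpred b ω - μ b) ∂P)
        + (∫ ω, (Ypot b ω - Mpred b ω) * (Mpred a ω - μ a) ∂P)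
        + ∫ ω, (Mpred a ω - μ a) * (Mpred b ω - μ b) ∂P := by
    have u0 : ∫ ω, ψ a ω * ψ b ω ∂P
        = ∫ ω, (Set.indicator {ω | A ω = a}
              (fun ω => (Ypot a ω - Mpred a ω) * (Mpred b ω - μ b) / π a) ω
            + Set.indicator {ω | A ω = b}
              (fun ω => (Ypot b ω - Mpred b ω) * (Mpred a ω - μ a) / π b) ω
            + (Mpred a ω - μ a) * (Mpred b ω - μ b)) ∂P :=
      integral_congr_ae (Filter.Eventually.of_forall hprod)
    have u1 : ∫ ω, (Set.indicator {ω | A ω = a}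
              (fun ω => (Ypot a ω - Mpred a ω) * (Mpred b ω - μ b) / π a) ω
            + Set.indicator {ω | A ω = b}
              (fun ω => (Ypot b ω - Mpred b ω) * (Mpred a ω - μ a) / π b) ω
            + (Mpred a ω - μ a) * (Mpred b ω - μ b)) ∂P
        = (∫ ω, (Set.indicator {ω | A ω = a}
              (fun ω => (Ypot a ω - Mpred a ω) * (Mpred b ω - μ b) / π a) ω
            + Set.indicator {ω | A ω = b}
              (fun ω => (Ypot b ω - Mpred b ω) * (Mpred a ω - μ a) / π b) ω) ∂P)
          + ∫ ω, (Mpred a ω - μ a) * (Mpred b ω - μ b) ∂P :=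
      integral_add (((hZab_int.div_const (π a)).indicator hsa).add
        ((hZba_int.div_const (π b)).indicator hsb)) hgg_int
    have u2 : ∫ ω, (Set.indicator {ω | A ω = a}
              (fun ω => (Ypot a ω - Mpred a ω) * (Mpred b ω - μ b) / π a) ω
            + Set.indicator {ω | A ω = b}
              (fun ω => (Ypot b ω - Mpred b ω) * (Mpred a ω - μ a) / π b) ω) ∂P
        = (∫ ω, Set.indicator {ω | A ω = a}
              (fun ω => (Ypot a ω - Mpred a ω) * (Mpred b ω - μ b) / π a) ω ∂P)
          + ∫ ω, Set.indicator {ω | A ω = b}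
              (fun ω => (Ypot b ω - Mpred b ω) * (Mpred a ω - μ a) / π b) ω ∂P :=
      integral_add ((hZab_int.div_const (π a)).indicator hsa)
        ((hZba_int.div_const (π b)).indicator hsb)
    have u3 : ∫ ω, Set.indicator {ω | A ω = a}
          (fun ω => (Ypot a ω - Mpred a ω) * (Mpred b ω - μ b) / π a) ω ∂P
        = ∫ ω in {ω | A ω = a}, (Ypot a ω - Mpred a ω) * (Mpred b ω - μ b) / π a ∂P :=
      integral_indicator hsa
    have u4 : ∫ ω, Set.indicator {ω | A ω = b}
          (fun ω => (Ypot b ω - Mpred b ω) * (Mpred a ω - μ a) / π b) ω ∂P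
        = ∫ ω in {ω | A ω = b}, (Ypot b ω - Mpred b ω) * (Mpred a ω - μ a) / π b ∂P :=
      integral_indicator hsb
    have u5 : ∫ ω in {ω | A ω = a}, (Ypot a ω - Mpred a ω) * (Mpred b ω - μ b) / π a ∂P
        = (∫ ω in {ω | A ω = a}, (Ypot a ω - Mpred a ω) * (Mpred b ω - μ b) ∂P) / π a :=
      integral_div _ _
    have u6 : ∫ ω in {ω | A ω = b}, (Ypot b ω - Mpred b ω) * (Mpred a ω - μ a) / π b ∂P
        = (∫ ω in {ω | A ω = b}, (Ypot b ω - Mpred b ω) * (Mpred a ω - μ a) ∂P) / π b :=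
      integral_div _ _
    rw [u0, u1, u2, u3, u4, u5, u6, hkey1, hkey2,
      mul_div_cancel_left₀ _ hπa, mul_div_cancel_left₀ _ hπb]
  -- expansions of the three integrals
  have e1 : ∫ ω, (Ypot a ω - Mpred a ω) * (Mpred b ω - μ b) ∂P
      = (∫ ω, Ypot a ω * Mpred b ω ∂P) - μ b * (∫ ω, Ypot a ω ∂P)
        - (∫ ω, Mpred a ω * Mpred b ω ∂P) + μ b * ∫ ω, Mpred a ω ∂P := by
    have h : (fun ω => (Ypot a ω - Mpred a ω) * (Mpred b ω - μ b))
        = fun ω => (Ypot a ω * Mpred b ω - μ b * Ypot a ω)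
            - (Mpred a ω * Mpred b ω - μ b * Mpred a ω) := by
      funext ω; ring
    have t1 : ∫ ω, ((Ypot a ω * Mpred b ω - μ b * Ypot a ω)
          - (Mpred a ω * Mpred b ω - μ b * Mpred a ω)) ∂P
        = (∫ ω, (Ypot a ω * Mpred b ω - μ b * Ypot a ω) ∂P)
          - ∫ ω, (Mpred a ω * Mpred b ω - μ b * Mpred a ω) ∂P :=
      integral_sub ((hmul _ _ (hY a) (hM b)).sub ((hYint a).const_mul (μ b)))
        ((hmul _ _ (hM a) (hM b)).sub ((hMint a).const_mul (μ b)))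
    have t2 : ∫ ω, (Ypot a ω * Mpred b ω - μ b * Ypot a ω) ∂P
        = (∫ ω, Ypot a ω * Mpred b ω ∂P) - ∫ ω, μ b * Ypot a ω ∂P :=
      integral_sub (hmul _ _ (hY a) (hM b)) ((hYint a).const_mul (μ b))
    have t3 : ∫ ω, (Mpred a ω * Mpred b ω - μ b * Mpred a ω) ∂P
        = (∫ ω, Mpred a ω * Mpred b ω ∂P) - ∫ ω, μ b * Mpred a ω ∂P :=
      integral_sub (hmul _ _ (hM a) (hM b)) ((hMint a).const_mul (μ b))
    have t4 : ∫ ω, μ b * Ypot a ω ∂P = μ b * ∫ ω, Ypot a ω ∂P := integral_const_mul _ _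
    have t5 : ∫ ω, μ b * Mpred a ω ∂P = μ b * ∫ ω, Mpred a ω ∂P := integral_const_mul _ _
    rw [h, t1, t2, t3, t4, t5]
    ring
  have e2 : ∫ ω, (Ypot b ω - Mpred b ω) * (Mpred a ω - μ a) ∂P
      = (∫ ω, Ypot b ω * Mpred a ω ∂P) - μ a * (∫ ω, Ypot b ω ∂P)
        - (∫ ω, Mpred a ω * Mpred b ω ∂P) + μ a * ∫ ω, Mpred b ω ∂P := by
    have h : (fun ω => (Ypot b ω - Mpred b ω) * (Mpred a ω - μ a))
        = fun ω => (Ypot b ω * Mpred a ω - μ a * Ypot b ω)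
            - (Mpred a ω * Mpred b ω - μ a * Mpred b ω) := by
      funext ω; ring
    have t1 : ∫ ω, ((Ypot b ω * Mpred a ω - μ a * Ypot b ω)
          - (Mpred a ω * Mpred b ω - μ a * Mpred b ω)) ∂P
        = (∫ ω, (Ypot b ω * Mpred a ω - μ a * Ypot b ω) ∂P)
          - ∫ ω, (Mpred a ω * Mpred b ω - μ a * Mpred b ω) ∂P :=
      integral_sub ((hmul _ _ (hY b) (hM a)).sub ((hYint b).const_mul (μ a)))
        ((hmul _ _ (hM a) (hM b)).sub ((hMint b).const_mul (μ a)))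
    have t2 : ∫ ω, (Ypot b ω * Mpred a ω - μ a * Ypot b ω) ∂P
        = (∫ ω, Ypot b ω * Mpred a ω ∂P) - ∫ ω, μ a * Ypot b ω ∂P :=
      integral_sub (hmul _ _ (hY b) (hM a)) ((hYint b).const_mul (μ a))
    have t3 : ∫ ω, (Mpred a ω * Mpred b ω - μ a * Mpred b ω) ∂P
        = (∫ ω, Mpred a ω * Mpred b ω ∂P) - ∫ ω, μ a * Mpred b ω ∂P :=
      integral_sub (hmul _ _ (hM a) (hM b)) ((hMint b).const_mul (μ a))
    have t4 : ∫ ω, μ a * Ypot b ω ∂P = μ a * ∫ ω, Ypot b ω ∂P := integral_const_mul _ _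
    have t5 : ∫ ω, μ a * Mpred b ω ∂P = μ a * ∫ ω, Mpred b ω ∂P := integral_const_mul _ _
    rw [h, t1, t2, t3, t4, t5]
    ring
  have e3 : ∫ ω, (Mpred a ω - μ a) * (Mpred b ω - μ b) ∂P
      = (∫ ω, Mpred a ω * Mpred b ω ∂P) - μ a * (∫ ω, Mpred b ω ∂P)
        - μ b * (∫ ω, Mpred a ω ∂P) + μ a * μ b := by
    have h : (fun ω => (Mpred a ω - μ a) * (Mpred b ω - μ b))
        = fun ω => (Mpred a ω * Mpred b ω - μ a * Mpred b ω)
            - (μ b * Mpred a ω - μ a * μ b) := by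
      funext ω; ring
    have t1 : ∫ ω, ((Mpred a ω * Mpred b ω - μ a * Mpred b ω)
          - (μ b * Mpred a ω - μ a * μ b)) ∂P
        = (∫ ω, (Mpred a ω * Mpred b ω - μ a * Mpred b ω) ∂P)
          - ∫ ω, (μ b * Mpred a ω - μ a * μ b) ∂P :=
      integral_sub ((hmul _ _ (hM a) (hM b)).sub ((hMint b).const_mul (μ a)))
        (((hMint a).const_mul (μ b)).sub (integrable_const (μ a * μ b)))
    have t2 : ∫ ω, (Mpred a ω * Mpred b ω - μ a * Mpred b ω) ∂P
        = (∫ ω, Mpred a ω * Mpred b ω ∂P) - ∫ ω, μ a * Mpred b ω ∂P :=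
      integral_sub (hmul _ _ (hM a) (hM b)) ((hMint b).const_mul (μ a))
    have t3 : ∫ ω, (μ b * Mpred a ω - μ a * μ b) ∂P
        = (∫ ω, μ b * Mpred a ω ∂P) - ∫ ω, (μ a * μ b : ℝ) ∂P :=
      integral_sub ((hMint a).const_mul (μ b)) (integrable_const (μ a * μ b))
    have t4 : ∫ ω, μ a * Mpred b ω ∂P = μ a * ∫ ω, Mpred b ω ∂P := integral_const_mul _ _
    have t5 : ∫ ω, μ b * Mpred a ω ∂P = μ b * ∫ ω, Mpred a ω ∂P := integral_const_mul _ _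
    have t6 : ∫ _ω, (μ a * μ b : ℝ) ∂P = μ a * μ b := by
      simp [measure_univ]
    rw [h, t1, t2, t3, t4, t5, t6]
    ring
  have hMa : ∫ ω, Mpred a ω ∂P = μ a := by rw [hunbiased a, ← hμ a]
  have hMb : ∫ ω, Mpred b ω ∂P = μ b := by rw [hunbiased b, ← hμ b]
  have hYa : ∫ ω, Ypot a ω ∂P = μ a := (hμ a).symm
  have hYb : ∫ ω, Ypot b ω ∂P = μ b := (hμ b).symm
  rw [hintprod, hmean a, hmean b, e1, e2, e3, hMa, hMb, hYa, hYb]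
  ring
end

section
/- Let d, v, c, n be real numbers with v > 0 and 0 < c < n. Then d²/(v + d²/n) ≤ c if and only if d² ≤ v·c/(1 − c/n). Consequently, for fixed e ∈ ℝ, the set of δ₀ ∈ ℝ satisfying (e − δ₀)²/(v + (e − δ₀)²/n) ≤ c is exactly the closed interval [e − √(v·c/(1 − c/n)), e + √(v·c/(1 − c/n))]. -/
lemma key_11 (d v c n : ℝ) (hv : 0 < v) (hc : 0 < c) (hcn : c < n) :
    d ^ 2 / (v + d ^ 2 / n) ≤ c ↔ d ^ 2 ≤ v * c / (1 - c / n) := by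
  have hn : 0 < n := hc.trans hcn
  have hden : 0 < v + d ^ 2 / n := by positivity
  have h1 : 0 < 1 - c / n := by
    have : c / n < 1 := (div_lt_one hn).mpr hcn
    linarith
  rw [div_le_iff₀ hden, le_div_iff₀ h1]
  have e1 : c * (v + d ^ 2 / n) = c * v + d ^ 2 * (c / n) := by ring
  constructor <;> intro h <;> nlinarith [e1]

lemma sq_le_iff_abs_le (x R : ℝ) (hR : 0 ≤ R) :
    x ^ 2 ≤ R ↔ |x| ≤ Real.sqrt R := by
  constructor
  · intro h
    have := Real.sqrt_le_sqrt h
    rwa [Real.sqrt_sq_eq_abs] at this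
  · intro h
    have h2 := Real.sq_sqrt hR
    nlinarith [sq_abs x, abs_nonneg x, Real.sqrt_nonneg R]

/-- Inversion of the generalized score test for the difference in means: the acceptance
region is the closed score confidence interval, symmetric about the point estimate. -/
theorem stmt_11 (d v c n : ℝ) (hv : 0 < v) (hc : 0 < c) (hcn : c < n) :
    (d ^ 2 / (v + d ^ 2 / n) ≤ c ↔ d ^ 2 ≤ v * c / (1 - c / n)) ∧
    ∀ e : ℝ, {δ : ℝ | (e - δ) ^ 2 / (v + (e - δ) ^ 2 / n) ≤ c}
      = Set.Icc (e - Real.sqrt (v * c / (1 - c / n)))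
          (e + Real.sqrt (v * c / (1 - c / n))) := by
  have hn : 0 < n := hc.trans hcn
  have h1 : 0 < 1 - c / n := by
    have : c / n < 1 := (div_lt_one hn).mpr hcn
    linarith
  have hR : 0 ≤ v * c / (1 - c / n) := by positivity
  refine ⟨key_11 d v c n hv hc hcn, fun e => ?_⟩
  ext δ
  simp only [Set.mem_setOf_eq, Set.mem_Icc, key_11 (e - δ) v c n hv hc hcn,
    sq_le_iff_abs_le _ _ hR, abs_le]
  constructor <;> rintro ⟨h1', h2'⟩ <;> constructor <;> linarith
end

section
/- Let c, n, Σ₁₁, Σ₂₁, Σ₂₂, μ₁, μ₂ be real numbers with n > 0, μ₁ ≠ 0, μ₂ ≠ 0. Define D := 1 − c·(Σ₁₁/μ₁² + 1/n), a := (1 − c·(Σ₂₁/(μ₁μ₂) + 1/n))/D, b := (1 − c·(Σ₂₂/μ₂² + 1/n))/D, and V(δ) := Σ₂₂ − 2δΣ₂₁ + δ²Σ₁₁. Suppose D > 0. Then for every real δ: (μ₂ − δμ₁)² ≤ c·(V(δ) + (μ₂ − δμ₁)²/n) if and only if δ² − 2a(μ₂/μ₁)δ + b(μ₂/μ₁)²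 ≤ 0. -/
/-- Inverting the generalized score test of the ratio hypothesis `H_R : μ₂/μ₁ = δ₀`
reduces to a quadratic inequality with coefficients `a` and `b`. -/
theorem stmt_12 (c n S11 S21 S22 μ1 μ2 : ℝ) (hn : 0 < n) (hμ1 : μ1 ≠ 0) (hμ2 : μ2 ≠ 0)
    (D a b : ℝ)
    (hD : D = 1 - c * (S11 / μ1 ^ 2 + 1 / n))
    (ha : a = (1 - c * (S21 / (μ1 * μ2) + 1 / n)) / D)
    (hb : b = (1 - c * (S22 / μ2 ^ 2 + 1 / n)) / D)
    (hDpos : 0 < D) :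
    ∀ δ : ℝ,
      (μ2 - δ * μ1) ^ 2 ≤ c * ((S22 - 2 * δ * S21 + δ ^ 2 * S11) + (μ2 - δ * μ1) ^ 2 / n)
        ↔ δ ^ 2 - 2 * a * (μ2 / μ1) * δ + b * (μ2 / μ1) ^ 2 ≤ 0 := by
  intro δ
  have hD' : D ≠ 0 := ne_of_gt hDpos
  have hn' : n ≠ 0 := ne_of_gt hn
  have haD : a * D = 1 - c * (S21 / (μ1 * μ2) + 1 / n) := by
    rw [ha]; field_simp
  have hbD : b * D = 1 - c * (S22 / μ2 ^ 2 + 1 / n) := by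
    rw [hb]; field_simp
  have key : (μ2 - δ * μ1) ^ 2 - c * ((S22 - 2 * δ * S21 + δ ^ 2 * S11) + (μ2 - δ * μ1) ^ 2 / n)
      = (μ1 ^ 2 * D) * (δ ^ 2 - 2 * a * (μ2 / μ1) * δ + b * (μ2 / μ1) ^ 2) := by
    have e1 : (μ1 ^ 2 * D) * (δ ^ 2 - 2 * a * (μ2 / μ1) * δ + b * (μ2 / μ1) ^ 2)
        = μ1 ^ 2 * D * δ ^ 2 - 2 * (a * D) * (μ1 * μ2) * δ + (b * D) * μ2 ^ 2 := by
      field_simp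
    rw [e1, haD, hbD, hD]
    field_simp
    ring
  have hpos : 0 < μ1 ^ 2 * D := mul_pos (by positivity) hDpos
  constructor
  · intro h
    have h2 : (μ1 ^ 2 * D) * (δ ^ 2 - 2 * a * (μ2 / μ1) * δ + b * (μ2 / μ1) ^ 2) ≤ 0 := by
      rw [← key]; linarith
    by_contra hq
    push_neg at hq
    nlinarith
  · intro h
    have h2 : (μ1 ^ 2 * D) * (δ ^ 2 - 2 * a * (μ2 / μ1) * δ + b * (μ2 / μ1) ^ 2) ≤ 0 :=
      mul_nonpos_of_nonneg_of_nonpos (le_of_lt hpos) h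
    linarith [key ▸ h2]
end
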